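/- For every finite rooted tree T with at least one internal (non-leaf) vertex, the geometric realization of the poset X_T of levelizations of T is contractible. (Lemma 7.2 of the paper.) -/

import Mathlib

/-- The geometric realization of a poset `P` (the realization of the nerve of `P`, i.e. of
the order complex of `P`), modelled concretely as the space of finitely supported
"barycentric coordinate" functions: assignments of nonnegative weights summing to `1`
whose support is a chain of `P`.  It is topologized as a subspace of `P → ℝ` with the
product topology. -/
def PosetRealization (P : Type*) [Preorder P] : Set (P → ℝ) :=
  {f | (∀ p, 0 ≤ f p) ∧ (Function.support f).Finite ∧ ∑ᶠ p, f p = 1 ∧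
      IsChain (· ≤ ·) (Function.support f)}

/-- The map of geometric realizations induced by a map of posets `g : P → Q`
(the realization of the induced simplicial map of nerves): a point with barycentric
coordinates `f` is sent to the point whose weight at `q` is the total weight of the
fiber `g ⁻¹ {q}`. -/
noncomputable def inducedChainMap {P Q : Type*} (g : P → Q) (f : P → ℝ) : Q → ℝ :=
  fun q => ∑ᶠ p ∈ {p | g p = q}, f p

/-- A levelization of (the internal vertices of) a rooted tree, viewed as a preordered
type `V`: a surjection onto a finite ordinal `Fin m` that is strictly order-preserving. -/
structure Levelization (V : Type) [Preorder V] where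
  m : ℕ
  level : V → Fin m
  surj : Function.Surjective level
  strict : ∀ v w : V, v < w → level v < level w

/-- The preorder on levelizations: `L' ≤ L` iff `L'` is obtained from `L` by merging
levels, i.e. `L'.level = φ ∘ L.level` for a weakly monotone surjection `φ`. -/
instance Levelization.instPreorder (V : Type) [Preorder V] : Preorder (Levelization V) where
  le A B := ∃ φ : Fin B.m → Fin A.m, Monotone φ ∧ Function.Surjective φ ∧
    ∀ v, A.level v = φ (B.level v)
  le_refl A := ⟨id, monotone_id, Function.surjective_id, fun _ => rfl⟩
  le_trans A B C := by
    rintro ⟨φ, hφm, hφs, hφ⟩ ⟨ψ, hψm, hψs, hψ⟩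
    exact ⟨φ ∘ ψ, hφm.comp hψm, hφs.comp hψs, fun v => by simp [hφ v, hψ v]⟩


set_option linter.unusedSectionVars false
set_option linter.unusedVariables false

open Finset

namespace LevelContractAux

open scoped Classical

variable {V : Type} [PartialOrder V] [Fintype V] [Nonempty V]

/-- natural-number level -/
def lev (L : Levelization V) (v : V) : ℕ := (L.level v : ℕ)

lemma mpos (L : Levelization V) : 0 < L.m := by
  obtain ⟨v⟩ := ‹Nonempty V›
  exact (L.level v).pos

lemma lev_lt (L : Levelization V) (v : V) : lev L v < L.m := (L.level v).isLt

lemma lev_mono (L : Levelization V) {v w : V} (h : v ≤ w) : lev L v ≤ lev L w := by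
  rcases eq_or_lt_of_le h with rfl | h
  · exact le_rfl
  · exact (Fin.lt_iff_val_lt_val.1 (L.strict _ _ h)).le

lemma lev_strict (L : Levelization V) {v w : V} (h : v < w) : lev L v < lev L w :=
  Fin.lt_iff_val_lt_val.1 (L.strict _ _ h)

lemma lev_surj (L : Levelization V) {k : ℕ} (hk : k < L.m) : ∃ v, lev L v = k := by
  obtain ⟨v, hv⟩ := L.surj ⟨k, hk⟩
  exact ⟨v, by simp [lev, hv]⟩

lemma Levelization.ext' {L M : Levelization V} (hm : L.m = M.m)
    (h : ∀ v, lev L v = lev M v) : L = M := by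
  cases L with
  | mk m₁ l₁ s₁ st₁ =>
    cases M with
    | mk m₂ l₂ s₂ st₂ =>
      dsimp at hm
      subst hm
      have : l₁ = l₂ := funext fun v => Fin.ext (h v)
      subst this
      rfl

lemma le_def {L M : Levelization V} :
    L ≤ M ↔ ∃ φ : Fin M.m → Fin L.m, Monotone φ ∧ Function.Surjective φ ∧
      ∀ v, L.level v = φ (M.level v) := Iff.rfl

/-- m is determined as the sup of levels plus one -/
lemma m_eq_sup (L : Levelization V) :
    L.m = Finset.univ.sup (lev L) + 1 := by
  obtain ⟨v, hv⟩ := lev_surj L (Nat.sub_lt (mpos L) one_pos)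
  have h1 : Finset.univ.sup (lev L) ≤ L.m - 1 := by
    refine Finset.sup_le fun w _ => ?_
    have := lev_lt L w
    omega
  have h2 : L.m - 1 ≤ Finset.univ.sup (lev L) := by
    rw [← hv]; exact Finset.le_sup (Finset.mem_univ v)
  have := mpos L
  omega

instance : Finite (Levelization V) := by
  have : Function.Injective (fun L : Levelization V => lev L) := by
    intro L M h
    have h' : ∀ v, lev L v = lev M v := fun v => congrFun h v
    have hm : L.m = M.m := by
      rw [m_eq_sup L, m_eq_sup M]
      congr 1
      exact Finset.sup_congr rfl fun v _ => h' v
    exact Levelization.ext' hm h'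
  have hbd : ∀ L : Levelization V, ∀ v, lev L v < Fintype.card V + 1 := by
    intro L v
    have h1 : lev L v < L.m := lev_lt L v
    have h2 : L.m ≤ Fintype.card V := by
      have := Fintype.card_le_of_surjective _ L.surj
      simpa using this
    omega
  refine Finite.of_injective (fun L : Levelization V => fun v => (⟨lev L v, hbd L v⟩ : Fin (Fintype.card V + 1))) ?_
  intro L M h
  apply this
  funext v
  have := congrFun h v
  simpa [Fin.mk.injEq] using this

noncomputable instance : Fintype (Levelization V) := Fintype.ofFinite _

/-- monotone surjective map between Fin's of equal size is the "identity" -/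
lemma phi_id {n n' : ℕ} (φ : Fin n → Fin n') (hm : Monotone φ) (hs : Function.Surjective φ)
    (hc : n = n') : ∀ i, (φ i : ℕ) = (i : ℕ) := by
  have hinj : Function.Bijective φ := by
    rw [Fintype.bijective_iff_surjective_and_card]
    simp [hs, hc]
  have hsm : StrictMono φ := hm.strictMono_of_injective hinj.1
  intro i
  exact Fin.coe_orderIso_apply (hsm.orderIsoOfSurjective φ hs) i

lemma lev_of_le {L M : Levelization V} (h : L ≤ M) :
    (∀ v w, lev M v ≤ lev M w → lev L v ≤ lev L w) ∧
    (∀ v w, lev M v = lev M w → lev L v = lev L w) := by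
  obtain ⟨φ, hφm, _, hφ⟩ := h
  constructor
  · intro v w hvw
    have : φ (M.level v) ≤ φ (M.level w) := hφm (by exact Fin.mk_le_mk.mpr hvw)
    simpa [lev, hφ v, hφ w] using this
  · intro v w hvw
    have : M.level v = M.level w := Fin.ext hvw
    simp [lev, hφ v, hφ w, this]

lemma levelization_le_antisymm {L M : Levelization V} (h1 : L ≤ M) (h2 : M ≤ L) : L = M := by
  obtain ⟨φ, hφm, hφs, hφ⟩ := h1
  have hm : L.m = M.m := by
    obtain ⟨ψ, _, hψs, _⟩ := h2
    have c1 := Fintype.card_le_of_surjective φ hφs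
    have c2 := Fintype.card_le_of_surjective ψ hψs
    simp only [Fintype.card_fin] at c1 c2
    omega
  refine Levelization.ext' hm fun v => ?_
  have := phi_id φ hφm hφs hm.symm (M.level v)
  simp only [lev, hφ v, this]

lemma le_of_levCompat {L M : Levelization V}
    (h : ∀ v w, lev M v ≤ lev M w → lev L v ≤ lev L w) : L ≤ M := by
  have heq : ∀ v w, lev M v = lev M w → lev L v = lev L w := fun v w hv =>
    le_antisymm (h v w hv.le) (h w v hv.ge)
  refine ⟨fun i => L.level (Function.surjInv M.surj i), ?_, ?_, ?_⟩
  · intro i j hij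
    have hi : M.level (Function.surjInv M.surj i) = i := Function.rightInverse_surjInv M.surj i
    have hj : M.level (Function.surjInv M.surj j) = j := Function.rightInverse_surjInv M.surj j
    have : lev M (Function.surjInv M.surj i) ≤ lev M (Function.surjInv M.surj j) := by
      simp only [lev, hi, hj]; exact hij
    exact h _ _ this
  · intro l
    obtain ⟨v, hv⟩ := L.surj l
    refine ⟨M.level v, ?_⟩
    have h2 : M.level (Function.surjInv M.surj (M.level v)) = M.level v :=
      Function.rightInverse_surjInv M.surj _
    have h3 : lev M (Function.surjInv M.surj (M.level v)) = lev M v := by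
      simp only [lev, h2]
    have := heq _ v h3
    rw [← hv]; exact Fin.ext this
  · intro v
    have h2 : M.level (Function.surjInv M.surj (M.level v)) = M.level v :=
      Function.rightInverse_surjInv M.surj _
    have h3 : lev M v = lev M (Function.surjInv M.surj (M.level v)) := by
      simp only [lev, h2]
    exact Fin.ext (heq v _ h3)

end LevelContractAux

namespace LevelContractAux

open scoped Classical

variable {V : Type} [PartialOrder V] [Fintype V] [Nonempty V]

/-- the `k`-th threshold (upper level set) of a levelization -/
noncomputable def Uset (L : Levelization V) (k : ℕ) : Finset V :=
  Finset.univ.filter (fun v => k ≤ lev L v)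

lemma mem_Uset {L : Levelization V} {k : ℕ} {v : V} : v ∈ Uset L k ↔ k ≤ lev L v := by
  simp [Uset]

/-- the family of thresholds of a levelization -/
noncomputable def Sfam (L : Levelization V) : Finset (Finset V) := (Finset.range L.m).image (Uset L)

/-- the family of all nonempty upper sets -/
noncomputable def AF (V : Type) [PartialOrder V] [Fintype V] : Finset (Finset V) :=
  Finset.univ.filter (fun s : Finset V => s.Nonempty ∧ ∀ v ∈ s, ∀ w, v ≤ w → w ∈ s)

lemma mem_AF {s : Finset V} : s ∈ AF V ↔ s.Nonempty ∧ ∀ v ∈ s, ∀ w, v ≤ w → w ∈ s := by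
  simp [AF]

lemma Uset_zero (L : Levelization V) : Uset L 0 = Finset.univ := by
  ext v; simp [mem_Uset]

lemma Uset_mem_Sfam (L : Levelization V) {k : ℕ} (hk : k < L.m) : Uset L k ∈ Sfam L :=
  Finset.mem_image_of_mem _ (Finset.mem_range.2 hk)

lemma univ_mem_Sfam (L : Levelization V) : Finset.univ ∈ Sfam L := by
  rw [← Uset_zero L]; exact Uset_mem_Sfam L (mpos L)

lemma Uset_nonempty (L : Levelization V) {k : ℕ} (hk : k < L.m) : (Uset L k).Nonempty := by
  obtain ⟨v, hv⟩ := lev_surj L hk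
  exact ⟨v, mem_Uset.2 hv.ge⟩

lemma Sfam_subset_AF (L : Levelization V) : Sfam L ⊆ AF V := by
  intro s hs
  obtain ⟨k, hk, rfl⟩ := Finset.mem_image.1 hs
  rw [Finset.mem_range] at hk
  refine mem_AF.2 ⟨Uset_nonempty L hk, ?_⟩
  intro v hv w hvw
  exact mem_Uset.2 ((mem_Uset.1 hv).trans (lev_mono L hvw))

lemma AF_nonempty_of_mem {s : Finset V} (hs : s ∈ AF V) : s.Nonempty := (mem_AF.1 hs).1

/-- a nonempty set which is upward closed with respect to the level function is a threshold -/
lemma mem_Sfam_of_upwardClosed {L : Levelization V} {s : Finset V} (hne : s.Nonempty)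
    (hup : ∀ v w, w ∈ s → lev L w ≤ lev L v → v ∈ s) : s ∈ Sfam L := by
  obtain ⟨w₀, hw₀, hmin⟩ := Finset.exists_mem_eq_inf' hne (lev L)
  have : s = Uset L (lev L w₀) := by
    ext v
    rw [mem_Uset]
    constructor
    · intro hv
      rw [← hmin]
      exact Finset.inf'_le _ hv
    · intro hv
      exact hup v w₀ hw₀ hv
  rw [this]
  exact Uset_mem_Sfam L (lev_lt L w₀)

lemma Sfam_mono {L M : Levelization V} (h : L ≤ M) : Sfam L ⊆ Sfam M := by
  intro s hs
  obtain ⟨k, hk, rfl⟩ := Finset.mem_image.1 hs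
  rw [Finset.mem_range] at hk
  refine mem_Sfam_of_upwardClosed (Uset_nonempty L hk) ?_
  intro v w hw hvw
  rw [mem_Uset] at hw ⊢
  exact hw.trans ((lev_of_le h).1 w v hvw)

lemma le_of_Sfam_subset {L M : Levelization V} (h : Sfam L ⊆ Sfam M) : L ≤ M := by
  apply le_of_levCompat
  intro v w hvw
  by_contra hc
  push_neg at hc
  have hmem : Uset L (lev L v) ∈ Sfam M := h (Uset_mem_Sfam L (lev_lt L v))
  obtain ⟨k, _, hk⟩ := Finset.mem_image.1 hmem
  have hv : v ∈ Uset M k := by rw [hk]; exact mem_Uset.2 le_rfl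
  have hw : w ∉ Uset M k := by rw [hk]; simp [mem_Uset]; omega
  rw [mem_Uset] at hv
  have : k ≤ lev M w := hv.trans hvw
  exact hw (mem_Uset.2 this)

/-! ### real-valued gap functions -/

/-- max of a finite family together with 0 -/
noncomputable def fmax {α : Type*} (s : Finset α) (g : α → ℝ) : ℝ := s.fold max 0 g

lemma fmax_nonneg {α : Type*} (s : Finset α) (g : α → ℝ) : 0 ≤ fmax s g := by
  rw [fmax, Finset.le_fold_max]; exact Or.inl le_rfl

lemma le_fmax {α : Type*} {s : Finset α} {g : α → ℝ} {i : α} (hi : i ∈ s) : g i ≤ fmax s g := by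
  rw [fmax, Finset.le_fold_max]; exact Or.inr ⟨i, hi, le_rfl⟩

lemma fmax_le {α : Type*} {s : Finset α} {g : α → ℝ} {c : ℝ} (h0 : 0 ≤ c)
    (h : ∀ i ∈ s, g i ≤ c) : fmax s g ≤ c := by
  rw [fmax, Finset.fold_max_le]; exact ⟨h0, h⟩

lemma fmax_lt {α : Type*} {s : Finset α} {g : α → ℝ} {c : ℝ} (h0 : 0 < c)
    (h : ∀ i ∈ s, g i < c) : fmax s g < c := by
  rw [fmax, Finset.fold_max_lt]; exact ⟨h0, h⟩

lemma fmax_empty {α : Type*} (g : α → ℝ) : fmax (∅ : Finset α) g = 0 := Finset.fold_empty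

/-- the "gap" of `x` across the boundary of a set `s` -/
noncomputable def gam (x : V → ℝ) (s : Finset V) : ℝ :=
  if hs : s.Nonempty then s.inf' hs x - fmax sᶜ x else 0

lemma gam_of_nonempty {x : V → ℝ} {s : Finset V} (hs : s.Nonempty) :
    gam x s = s.inf' hs x - fmax sᶜ x := dif_pos hs

/-- the minimum gap of the thresholds of `L` -/
noncomputable def minIn (L : Levelization V) (x : V → ℝ) : ℝ :=
  (Finset.range L.m).inf' (Finset.nonempty_range_iff.2 (mpos L).ne') (fun k => gam x (Uset L k))

/-- the largest gap over upper sets which are not thresholds of `L` (or 0) -/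
noncomputable def Om (L : Levelization V) (x : V → ℝ) : ℝ :=
  fmax (AF V \ Sfam L) (gam x)

noncomputable def wgt (L : Levelization V) (x : V → ℝ) : ℝ :=
  (L.m : ℝ) * max 0 (minIn L x - Om L x)

noncomputable def Tsum (x : V → ℝ) : ℝ := ∑ L : Levelization V, wgt L x

noncomputable def Gmap (x : V → ℝ) : Levelization V → ℝ := fun L => wgt L x / Tsum x

lemma wgt_nonneg (L : Levelization V) (x : V → ℝ) : 0 ≤ wgt L x :=
  mul_nonneg (Nat.cast_nonneg _) (le_max_left _ _)

lemma Om_nonneg (L : Levelization V) (x : V → ℝ) : 0 ≤ Om L x := fmax_nonneg _ _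

lemma minIn_le_gam {L : Levelization V} {x : V → ℝ} {k : ℕ} (hk : k < L.m) :
    minIn L x ≤ gam x (Uset L k) :=
  Finset.inf'_le _ (Finset.mem_range.2 hk)

lemma gam_le_Om {L : Levelization V} {x : V → ℝ} {s : Finset V} (hs : s ∈ AF V)
    (hns : s ∉ Sfam L) : gam x s ≤ Om L x :=
  le_fmax (Finset.mem_sdiff.2 ⟨hs, hns⟩)

lemma wgt_pos_iff {L : Levelization V} {x : V → ℝ} : 0 < wgt L x ↔ Om L x < minIn L x := by
  rw [wgt]
  constructor
  · intro h
    by_contra hc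
    push_neg at hc
    have : max 0 (minIn L x - Om L x) = 0 := max_eq_left (by linarith)
    rw [this, mul_zero] at h
    exact lt_irrefl _ h
  · intro h
    have hm : (0:ℝ) < L.m := by exact_mod_cast mpos L
    have : max 0 (minIn L x - Om L x) = minIn L x - Om L x := max_eq_right (by linarith)
    rw [this]
    exact mul_pos hm (by linarith)

/-- the region of strictly order-respecting positive vectors -/
def Oset (V : Type) [PartialOrder V] : Set (V → ℝ) :=
  {x | (∀ v, 0 < x v) ∧ ∀ ⦃u v : V⦄, u < v → x u < x v}

/-- barycentric embedding coordinates -/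
noncomputable def eL (L : Levelization V) (v : V) : ℝ := ((lev L v : ℝ) + 1) / (L.m : ℝ)

noncomputable def Fmap (f : Levelization V → ℝ) : V → ℝ :=
  fun v => ∑ L : Levelization V, f L * eL L v

end LevelContractAux

namespace LevelContractAux

open scoped Classical

variable {V : Type} [PartialOrder V] [Fintype V] [Nonempty V]

/-- the levelization determined by the value classes of `x` -/
noncomputable def valueLev (x : V → ℝ) (hx : x ∈ Oset V) : Levelization V where
  m := (Finset.univ.image x).card
  level v := ((Finset.univ.image x).orderIsoOfFin rfl).symm
    ⟨x v, Finset.mem_image_of_mem x (Finset.mem_univ v)⟩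
  surj := by
    intro i
    have hmem : ((Finset.univ.image x).orderIsoOfFin rfl i : ℝ) ∈ Finset.univ.image x :=
      ((Finset.univ.image x).orderIsoOfFin rfl i).2
    obtain ⟨v, _, hv⟩ := Finset.mem_image.1 hmem
    refine ⟨v, ?_⟩
    show ((Finset.univ.image x).orderIsoOfFin rfl).symm _ = i
    rw [OrderIso.symm_apply_eq]
    exact Subtype.ext hv
  strict := by
    intro v w hvw
    have hlt : x v < x w := hx.2 hvw
    have : (⟨x v, Finset.mem_image_of_mem x (Finset.mem_univ v)⟩ :
        {a // a ∈ Finset.univ.image x}) < ⟨x w, Finset.mem_image_of_mem x (Finset.mem_univ w)⟩ :=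
      Subtype.mk_lt_mk.2 hlt
    exact (OrderIso.lt_iff_lt _).2 this

lemma valueLev_compat {x : V → ℝ} (hx : x ∈ Oset V) {v w : V} :
    lev (valueLev x hx) v ≤ lev (valueLev x hx) w ↔ x v ≤ x w := by
  rw [lev, lev, ← Fin.le_def]
  show ((Finset.univ.image x).orderIsoOfFin rfl).symm _ ≤
    ((Finset.univ.image x).orderIsoOfFin rfl).symm _ ↔ _
  exact (OrderIso.le_iff_le _).trans Subtype.mk_le_mk

/-- the crucial negativity result: gaps of non-thresholds are nonpositive -/
lemma gam_nonpos {L : Levelization V} {x : V → ℝ}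
    (hcmp : ∀ v w, lev L v ≤ lev L w → x v ≤ x w)
    {s : Finset V} (hne : s.Nonempty) (hns : s ∉ Sfam L) : gam x s ≤ 0 := by
  by_contra hc
  push_neg at hc
  rw [gam_of_nonempty hne] at hc
  -- every element outside s is strictly below every element inside s
  have hsep : ∀ v, v ∉ s → ∀ w ∈ s, x v < x w := by
    intro v hv w hw
    have h1 : x v ≤ fmax sᶜ x := le_fmax (Finset.mem_compl.2 hv)
    have h2 : s.inf' hne x ≤ x w := Finset.inf'_le _ hw
    linarith
  refine hns (mem_Sfam_of_upwardClosed hne ?_)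
  intro v w hw hlev
  by_contra hv
  have := hsep v hv w hw
  have := hcmp w v hlev
  linarith

lemma gam_pos_at_valueLev {x : V → ℝ} (hx : x ∈ Oset V) {k : ℕ}
    (hk : k < (valueLev x hx).m) : 0 < gam x (Uset (valueLev x hx) k) := by
  have hcmp : ∀ v w : V, lev (valueLev x hx) v ≤ lev (valueLev x hx) w ↔ x v ≤ x w :=
    fun v w => valueLev_compat hx
  obtain ⟨vk, hvk⟩ := lev_surj (valueLev x hx) hk
  have hne : (Uset (valueLev x hx) k).Nonempty := ⟨vk, mem_Uset.2 hvk.ge⟩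
  rw [gam_of_nonempty hne]
  have h1 : x vk ≤ (Uset (valueLev x hx) k).inf' hne x := by
    refine Finset.le_inf' _ _ fun v hv => ?_
    rw [mem_Uset] at hv
    exact (hcmp vk v).1 (by omega)
  have h2 : fmax (Uset (valueLev x hx) k)ᶜ x < x vk := by
    refine fmax_lt (hx.1 vk) ?_
    intro u hu
    rw [Finset.mem_compl, mem_Uset] at hu
    by_contra hc
    push_neg at hc
    have := (hcmp vk u).2 hc
    omega
  linarith

lemma Om_valueLev_eq_zero {x : V → ℝ} (hx : x ∈ Oset V) : Om (valueLev x hx) x = 0 := by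
  refine le_antisymm (fmax_le le_rfl ?_) (fmax_nonneg _ _)
  intro s hs
  rw [Finset.mem_sdiff] at hs
  exact gam_nonpos (fun v w h => (valueLev_compat hx).1 h) (AF_nonempty_of_mem hs.1) hs.2

lemma wgt_valueLev_pos {x : V → ℝ} (hx : x ∈ Oset V) : 0 < wgt (valueLev x hx) x := by
  rw [wgt_pos_iff, Om_valueLev_eq_zero hx, minIn]
  rw [Finset.lt_inf'_iff]
  intro k hk
  exact gam_pos_at_valueLev hx (Finset.mem_range.1 hk)

lemma Tsum_pos {x : V → ℝ} (hx : x ∈ Oset V) : 0 < Tsum x :=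
  lt_of_lt_of_le (wgt_valueLev_pos hx)
    (Finset.single_le_sum (fun L _ => wgt_nonneg L x) (Finset.mem_univ _))

/-- two levelizations with positive weight are comparable -/
lemma comparable_of_wgt_pos {x : V → ℝ} {L L' : Levelization V}
    (hL : 0 < wgt L x) (hL' : 0 < wgt L' x) : L ≤ L' ∨ L' ≤ L := by
  rw [wgt_pos_iff] at hL hL'
  by_cases hsub : Sfam L ⊆ Sfam L'
  · exact Or.inl (le_of_Sfam_subset hsub)
  by_cases hsub' : Sfam L' ⊆ Sfam L
  · exact Or.inr (le_of_Sfam_subset hsub')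
  exfalso
  obtain ⟨U, hU1, hU2⟩ := Finset.not_subset.1 hsub
  obtain ⟨U', hU1', hU2'⟩ := Finset.not_subset.1 hsub'
  obtain ⟨k, hk, hkU⟩ := Finset.mem_image.1 hU1
  obtain ⟨k', hk', hkU'⟩ := Finset.mem_image.1 hU1'
  rw [Finset.mem_range] at hk hk'
  have h1 : minIn L x ≤ gam x U := by rw [← hkU]; exact minIn_le_gam hk
  have h2 : gam x U ≤ Om L' x := gam_le_Om (Sfam_subset_AF L hU1) hU2
  have h3 : minIn L' x ≤ gam x U' := by rw [← hkU']; exact minIn_le_gam hk'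
  have h4 : gam x U' ≤ Om L x := gam_le_Om (Sfam_subset_AF L' hU1') hU2'
  linarith

/-- `Gmap x` is a point of the poset realization -/
lemma Gmap_mem {x : V → ℝ} (hx : x ∈ Oset V) :
    Gmap x ∈ PosetRealization (Levelization V) := by
  have hT := Tsum_pos hx
  refine ⟨?_, ?_, ?_, ?_⟩
  · intro L
    exact div_nonneg (wgt_nonneg L x) hT.le
  · exact Set.toFinite _
  · rw [finsum_eq_sum_of_fintype]
    have : ∑ L : Levelization V, Gmap x L = (∑ L : Levelization V, wgt L x) / Tsum x := by
      rw [Finset.sum_div]; rfl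
    rw [this, ← Tsum, div_self hT.ne']
  · intro L hL L' hL' _
    have h1 : 0 < wgt L x := by
      rcases lt_or_eq_of_le (wgt_nonneg L x) with h | h
      · exact h
      · exfalso; apply hL; simp only [Gmap, Function.mem_support] at *; rw [← h, zero_div]
    have h2 : 0 < wgt L' x := by
      rcases lt_or_eq_of_le (wgt_nonneg L' x) with h | h
      · exact h
      · exfalso; apply hL'; simp only [Gmap, Function.mem_support] at *; rw [← h, zero_div]
    exact comparable_of_wgt_pos h1 h2

end LevelContractAux

namespace LevelContractAux

open scoped Classical

variable {V : Type} [PartialOrder V] [Fintype V] [Nonempty V]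

lemma eL_pos (L : Levelization V) (v : V) : 0 < eL L v := by
  have h1 : (0:ℝ) < (lev L v : ℝ) + 1 := by positivity
  have h2 : (0:ℝ) < (L.m : ℝ) := by exact_mod_cast mpos L
  exact div_pos h1 h2

lemma eL_mono {L : Levelization V} {v w : V} (h : lev L v ≤ lev L w) : eL L v ≤ eL L w := by
  have h2 : (0:ℝ) < (L.m : ℝ) := by exact_mod_cast mpos L
  unfold eL
  gcongr


lemma eL_strict {L : Levelization V} {v w : V} (h : lev L v < lev L w) : eL L v < eL L w := by
  have h2 : (0:ℝ) < (L.m : ℝ) := by exact_mod_cast mpos L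
  unfold eL
  gcongr


lemma sum_eq_one {f : Levelization V → ℝ} (hf : f ∈ PosetRealization (Levelization V)) :
    ∑ L : Levelization V, f L = 1 := by
  have := hf.2.2.1
  rwa [finsum_eq_sum_of_fintype] at this

lemma F_mem_O {f : Levelization V → ℝ} (hf : f ∈ PosetRealization (Levelization V)) :
    Fmap f ∈ Oset V := by
  have hpos := hf.1
  have hsum := sum_eq_one hf
  have hex : ∃ L₀ : Levelization V, 0 < f L₀ := by
    by_contra hc
    push_neg at hc
    have : ∀ L : Levelization V, f L = 0 := fun L => le_antisymm (hc L) (hpos L)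
    rw [Finset.sum_congr rfl (fun L _ => this L), Finset.sum_const_zero] at hsum
    norm_num at hsum
  obtain ⟨L₀, hL₀⟩ := hex
  constructor
  · intro v
    refine Finset.sum_pos' (fun L _ => mul_nonneg (hpos L) (eL_pos L v).le) ?_
    exact ⟨L₀, Finset.mem_univ _, mul_pos hL₀ (eL_pos L₀ v)⟩
  · intro u v huv
    refine Finset.sum_lt_sum (fun L _ => ?_) ⟨L₀, Finset.mem_univ _, ?_⟩
    · exact mul_le_mul_of_nonneg_left (eL_mono (lev_strict L huv).le) (hpos L)
    · exact mul_lt_mul_of_pos_left (eL_strict (lev_strict L₀ huv)) hL₀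

/-- The key computation: on the image of `Fmap`, the weights recover `f`. -/
lemma wgt_Fmap {f : Levelization V → ℝ} (hf : f ∈ PosetRealization (Levelization V))
    (L : Levelization V) : wgt L (Fmap f) = f L := by
  have hpos := hf.1
  have hch := hf.2.2.2
  have hsum := sum_eq_one hf
  set x := Fmap f with hxdef
  have hxO : x ∈ Oset V := F_mem_O hf
  set sf : Finset (Levelization V) := Finset.univ.filter (fun M => f M ≠ 0) with hsf
  have hmem_sf : ∀ {M : Levelization V}, M ∈ sf ↔ f M ≠ 0 := by
    intro M; simp [hsf]
  have hfpos : ∀ M ∈ sf, 0 < f M := fun M hM => (hpos M).lt_of_ne' (hmem_sf.1 hM)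
  have hsum_sf : ∑ M ∈ sf, f M = 1 := by
    rw [hsf, Finset.sum_filter_ne_zero, hsum]
  have hsf_ne : sf.Nonempty := by
    by_contra hc
    rw [Finset.not_nonempty_iff_eq_empty] at hc
    rw [hc, Finset.sum_empty] at hsum_sf
    norm_num at hsum_sf
  have hcomp : ∀ M ∈ sf, ∀ M' ∈ sf, M ≤ M' ∨ M' ≤ M := by
    intro M hM M' hM'
    rcases eq_or_ne M M' with rfl | hne
    · exact Or.inl le_rfl
    · exact hch (hmem_sf.1 hM) (hmem_sf.1 hM') hne
  -- greatest and least elements of subsets of the support chain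
  have hgreatest : ∀ t : Finset (Levelization V), t ⊆ sf → t.Nonempty →
      ∃ b ∈ t, ∀ M ∈ t, M ≤ b := by
    intro t hts htne
    obtain ⟨b, hb, hbmax⟩ : ∃ b ∈ t, ∀ M ∈ t, ¬ b < M := by
      obtain ⟨i, hi⟩ := Finset.exists_maximal htne
      exact ⟨i, hi.1, fun M hM hlt => lt_irrefl _ (hlt.trans_le (hi.2 hM hlt.le))⟩
    refine ⟨b, hb, fun M hM => ?_⟩
    rcases hcomp M (hts hM) b (hts hb) with h | h
    · exact h
    · by_contra hMb
      exact hbmax M hM (lt_of_le_not_ge h hMb)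
  have hleast : ∀ t : Finset (Levelization V), t ⊆ sf → t.Nonempty →
      ∃ b ∈ t, ∀ M ∈ t, b ≤ M := by
    intro t hts htne
    obtain ⟨b, hb, hbmin⟩ : ∃ b ∈ t, ∀ M ∈ t, ¬ M < b := by
      obtain ⟨i, hi⟩ := Finset.exists_minimal htne
      exact ⟨i, hi.1, fun M hM hlt => lt_irrefl _ (hlt.trans_le (hi.2 hM hlt.le))⟩
    refine ⟨b, hb, fun M hM => ?_⟩
    rcases hcomp M (hts hM) b (hts hb) with h | h
    · by_contra hbM
      exact hbmin M hM (lt_of_le_not_ge h hbM)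
    · exact h
  obtain ⟨Mt, hMt_mem, hMt⟩ := hgreatest sf Finset.Subset.rfl hsf_ne
  -- expression of x as a sum over the support
  have hxval : ∀ v, x v = ∑ M ∈ sf, f M * eL M v := by
    intro v
    rw [hxdef]
    refine (Finset.sum_subset (Finset.filter_subset _ _) ?_).symm
    intro M _ hM
    have : f M = 0 := by
      by_contra hc
      exact hM (hmem_sf.2 hc)
    rw [this, zero_mul]
  have xmono : ∀ v w, lev Mt v ≤ lev Mt w → x v ≤ x w := by
    intro v w h
    rw [hxval v, hxval w]
    refine Finset.sum_le_sum fun M hM => ?_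
    exact mul_le_mul_of_nonneg_left (eL_mono ((lev_of_le (hMt M hM)).1 v w h)) (hpos M)
  have xstrict : ∀ v w, lev Mt v < lev Mt w → x v < x w := by
    intro v w h
    rw [hxval v, hxval w]
    refine Finset.sum_lt_sum (fun M hM => ?_) ⟨Mt, hMt_mem, ?_⟩
    · exact mul_le_mul_of_nonneg_left (eL_mono ((lev_of_le (hMt M hM)).1 v w h.le)) (hpos M)
    · exact mul_lt_mul_of_pos_left (eL_strict h) (hfpos Mt hMt_mem)
  -- the fundamental gap computation on thresholds of Mt
  set g : Finset V → ℝ := fun U => ∑ M ∈ sf.filter (fun M => U ∈ Sfam M), f M / (M.m : ℝ)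
    with hg
  have gam_img : ∀ k, k < Mt.m → gam x (Uset Mt k) = g (Uset Mt k) := by
    intro k hk
    obtain ⟨vk, hvk⟩ := lev_surj Mt hk
    have hne : (Uset Mt k).Nonempty := ⟨vk, mem_Uset.2 hvk.ge⟩
    have hinf : (Uset Mt k).inf' hne x = x vk := by
      refine le_antisymm (Finset.inf'_le _ (mem_Uset.2 hvk.ge)) ?_
      refine Finset.le_inf' _ _ fun v hv => ?_
      exact xmono vk v (by rw [hvk]; exact mem_Uset.1 hv)
    rw [gam_of_nonempty hne, hinf]
    rcases Nat.eq_zero_or_pos k with rfl | hkpos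
    · -- k = 0 : the whole set
      have hU : Uset Mt 0 = Finset.univ := Uset_zero Mt
      have hcompl : (Uset Mt 0)ᶜ = (∅ : Finset V) := by rw [hU, Finset.compl_univ]
      rw [hcompl, fmax_empty, sub_zero, hxval vk]
      have hlev0 : ∀ M ∈ sf, lev M vk = 0 := by
        intro M hM
        obtain ⟨u0, hu0⟩ := lev_surj M (mpos M)
        have := (lev_of_le (hMt M hM)).1 vk u0 (by rw [hvk]; exact Nat.zero_le _)
        omega
      have hfilter : sf.filter (fun M => Uset Mt 0 ∈ Sfam M) = sf := by
        refine Finset.filter_true_of_mem fun M _ => ?_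
        rw [hU, ← Uset_zero M]
        exact Uset_mem_Sfam M (mpos M)
      have hgU : g (Uset Mt 0) = ∑ M ∈ sf, f M / (M.m:ℝ) := by
        rw [hg]
        show ∑ M ∈ sf.filter (fun M => Uset Mt 0 ∈ Sfam M), f M / (M.m:ℝ) = _
        rw [hfilter]
      rw [hgU]
      refine Finset.sum_congr rfl fun M hM => ?_
      rw [eL, hlev0 M hM]
      push_cast
      rw [zero_add, mul_one_div]
    · -- k ≥ 1
      have hk1 : k - 1 < Mt.m := by omega
      obtain ⟨vk1, hvk1⟩ := lev_surj Mt hk1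
      have hfm : fmax (Uset Mt k)ᶜ x = x vk1 := by
        refine le_antisymm (fmax_le (hxO.1 vk1).le ?_) (le_fmax ?_)
        · intro u hu
          rw [Finset.mem_compl, mem_Uset] at hu
          exact xmono u vk1 (by omega)
        · rw [Finset.mem_compl, mem_Uset]
          omega
      rw [hfm, hxval vk, hxval vk1, ← Finset.sum_sub_distrib]
      have hgU : g (Uset Mt k) = ∑ M ∈ sf, if Uset Mt k ∈ Sfam M then f M / (M.m:ℝ) else 0 := by
        rw [hg]; exact Finset.sum_filter _ _
      rw [hgU]
      refine Finset.sum_congr rfl fun M hM => ?_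
      have hMle := hMt M hM
      have hlev := (lev_of_le hMle).1
      set a := lev M vk with ha
      set b := lev M vk1 with hb
      have hba : b ≤ a := hlev vk1 vk (by omega)
      have hab1 : a ≤ b + 1 := by
        by_contra hc
        push_neg at hc
        have hbm : b + 1 < M.m := by
          have := lev_lt M vk
          omega
        obtain ⟨u, hu⟩ := lev_surj M hbm
        rcases le_or_gt (lev Mt u) (k - 1) with h | h
        · have := hlev u vk1 (by omega)
          omega
        · have := hlev vk u (by omega)
          omega
      have hJ2 : Uset Mt k ∈ Sfam M ↔ a = b + 1 := by
        constructor
        · intro hmem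
          obtain ⟨j, _, hjU⟩ := Finset.mem_image.1 hmem
          have h1 : vk ∈ Uset Mt k := mem_Uset.2 hvk.ge
          have h2 : vk1 ∉ Uset Mt k := by rw [mem_Uset]; omega
          rw [← hjU] at h1 h2
          rw [mem_Uset] at h1
          have h2' : ¬ j ≤ b := fun hc => h2 (mem_Uset.2 hc)
          omega
        · intro hab
          have : Uset Mt k = Uset M a := by
            ext v
            rw [mem_Uset, mem_Uset]
            constructor
            · intro hv
              exact hlev vk v (by omega)
            · intro hv
              by_contra hc
              push_neg at hc
              have := hlev v vk1 (by omega)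
              omega
          rw [this]
          exact Uset_mem_Sfam M (lev_lt M vk)
      rcases (by omega : a = b + 1 ∨ a = b) with hcase | hcase
      · rw [if_pos (hJ2.2 hcase)]
        have heq : eL M vk - eL M vk1 = 1 / (M.m : ℝ) := by
          rw [eL, eL, div_sub_div_same, ← ha, ← hb, hcase]
          push_cast
          ring_nf
        rw [← mul_sub, heq, mul_one_div]
      · rw [if_neg (fun hmem => by have := hJ2.1 hmem; omega : ¬ Uset Mt k ∈ Sfam M)]
        have heq : eL M vk = eL M vk1 := by rw [eL, eL, ← ha, ← hb, hcase]
        rw [← mul_sub, heq, sub_self, mul_zero]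
  -- gam on any threshold of Mt
  have hgam_eq : ∀ U ∈ Sfam Mt, gam x U = g U := by
    intro U hU
    obtain ⟨k, hk, rfl⟩ := Finset.mem_image.1 hU
    exact gam_img k (Finset.mem_range.1 hk)
  -- tail sums
  set τ : Levelization V → ℝ := fun a => ∑ M ∈ sf.filter (fun M => a ≤ M), f M / (M.m : ℝ)
    with hτ
  have τ_nonneg : ∀ a, 0 ≤ τ a := by
    intro a
    refine Finset.sum_nonneg fun M hM => ?_
    have := hpos M
    positivity
  have gsum_ge : ∀ a ∈ sf, ∀ U, U ∈ Sfam a → τ a ≤ g U := by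
    intro a ha U hU
    rw [hτ, hg]
    refine Finset.sum_le_sum_of_subset_of_nonneg ?_ ?_
    · intro M hM
      rw [Finset.mem_filter] at hM ⊢
      exact ⟨hM.1, Sfam_mono hM.2 hU⟩
    · intro M _ _
      have := hpos M
      positivity
  have gsum_le : ∀ (a : Levelization V) (U : Finset V),
      (∀ M ∈ sf, U ∈ Sfam M → a ≤ M) → g U ≤ τ a := by
    intro a U h
    rw [hτ, hg]
    refine Finset.sum_le_sum_of_subset_of_nonneg ?_ ?_
    · intro M hM
      rw [Finset.mem_filter] at hM ⊢
      exact ⟨hM.1, h M hM.1 hM.2⟩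
    · intro M _ _
      have := hpos M
      positivity
  -- the key minimum computation
  have keyU : ∀ L' : Levelization V, Sfam L' ⊆ Sfam Mt → ∀ a ∈ sf, L' ≤ a →
      (∀ M ∈ sf, L' ≤ M → a ≤ M) → minIn L' x = τ a := by
    intro L' hsub a ha hL'a haleast
    refine le_antisymm ?_ ?_
    · -- find a threshold whose gap is at most τ a
      set t : Finset (Levelization V) := sf.filter (fun M => ¬ L' ≤ M) with htdef
      by_cases ht : t.Nonempty
      · obtain ⟨M₀, hM₀t, hM₀max⟩ := hgreatest t (Finset.filter_subset _ _) ht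
        have hM₀nle : ¬ L' ≤ M₀ := (Finset.mem_filter.1 hM₀t).2
        have hnsub : ¬ Sfam L' ⊆ Sfam M₀ := fun hc => hM₀nle (le_of_Sfam_subset hc)
        obtain ⟨U, hU1, hU2⟩ := Finset.not_subset.1 hnsub
        obtain ⟨k, hk, hkU⟩ := Finset.mem_image.1 hU1
        rw [Finset.mem_range] at hk
        have h1 : minIn L' x ≤ gam x U := by rw [← hkU]; exact minIn_le_gam hk
        have h2 : gam x U = g U := hgam_eq U (hsub hU1)
        have h3 : g U ≤ τ a := by
          refine gsum_le a U fun M hM hUM => ?_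
          refine haleast M hM ?_
          by_contra hc
          have hMt' : M ∈ t := Finset.mem_filter.2 ⟨hM, hc⟩
          have := Sfam_mono (hM₀max M hMt') hUM
          exact hU2 this
        rw [h2] at h1
        exact h1.trans h3
      · -- all of the support is above L'
        have hall : ∀ M ∈ sf, L' ≤ M := by
          intro M hM
          by_contra hc
          exact ht ⟨M, Finset.mem_filter.2 ⟨hM, hc⟩⟩
        have h1 : minIn L' x ≤ gam x (Uset L' 0) := minIn_le_gam (mpos L')
        have h2 : gam x (Uset L' 0) = g (Uset L' 0) :=
          hgam_eq _ (hsub (Uset_mem_Sfam L' (mpos L')))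
        have h3 : g (Uset L' 0) = τ a := by
          have e1 : sf.filter (fun M => Uset L' 0 ∈ Sfam M) = sf :=
            Finset.filter_true_of_mem fun M _ => by
              rw [Uset_zero, ← Uset_zero M]; exact Uset_mem_Sfam M (mpos M)
          have e2 : sf.filter (fun M => a ≤ M) = sf :=
            Finset.filter_true_of_mem fun M hM => haleast M hM (hall M hM)
          rw [hg, hτ]
          simp only [e1, e2]
        rw [h2, h3] at h1
        exact h1
    · -- lower bound
      refine Finset.le_inf' _ _ fun k hk => ?_
      have hUk : Uset L' k ∈ Sfam L' := Uset_mem_Sfam L' (Finset.mem_range.1 hk)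
      rw [hgam_eq _ (hsub hUk)]
      exact gsum_ge a ha _ (Sfam_mono hL'a hUk)
  -- bound for Om from above
  have Om_le_bound : ∀ (L' : Levelization V) (c : ℝ), 0 ≤ c →
      (∀ s ∈ Sfam Mt, s ∉ Sfam L' → g s ≤ c) → Om L' x ≤ c := by
    intro L' c hc h
    refine fmax_le hc fun s hs => ?_
    rw [Finset.mem_sdiff] at hs
    by_cases hsMt : s ∈ Sfam Mt
    · rw [hgam_eq s hsMt]
      exact h s hsMt hs.2
    · exact le_trans (gam_nonpos xmono (AF_nonempty_of_mem hs.1) hsMt) hc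
  -- final case analysis
  by_cases hLsf : L ∈ sf
  · -- L is in the support
    have hLMt : L ≤ Mt := hMt L hLsf
    have hminIn : minIn L x = τ L :=
      keyU L (Sfam_mono hLMt) L hLsf le_rfl (fun M _ h => h)
    set t : Finset (Levelization V) := sf.filter (fun M => ¬ M ≤ L) with htdef
    by_cases ht : t.Nonempty
    · obtain ⟨b, hbt, hble⟩ := hleast t (Finset.filter_subset _ _) ht
      have hbsf : b ∈ sf := (Finset.mem_filter.1 hbt).1
      have hbnle : ¬ b ≤ L := (Finset.mem_filter.1 hbt).2
      have hOm : Om L x = τ b := by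
        refine le_antisymm ?_ ?_
        · refine Om_le_bound L (τ b) (τ_nonneg b) fun s _ hsL => ?_
          refine gsum_le b s fun M hM hsM => ?_
          refine hble M (Finset.mem_filter.2 ⟨hM, fun hc => ?_⟩)
          exact hsL (Sfam_mono hc hsM)
        · have hnsub : ¬ Sfam b ⊆ Sfam L := fun hc => hbnle (le_of_Sfam_subset hc)
          obtain ⟨U', hU1', hU2'⟩ := Finset.not_subset.1 hnsub
          have h1 : gam x U' = g U' := hgam_eq U' (Sfam_mono (hMt b hbsf) hU1')
          have h2 : τ b ≤ g U' := gsum_ge b hbsf U' hU1'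
          have h3 : gam x U' ≤ Om L x := gam_le_Om (Sfam_subset_AF b hU1') hU2'
          rw [h1] at h3
          exact h2.trans h3
      have hdiff : τ L - τ b = f L / (L.m : ℝ) := by
        have hsub1 : sf.filter (fun M => b ≤ M) ⊆ sf.filter (fun M => L ≤ M) := by
          intro M hM
          rw [Finset.mem_filter] at hM ⊢
          refine ⟨hM.1, ?_⟩
          rcases hcomp M hM.1 L hLsf with h | h
          · exfalso; exact hbnle (hM.2.trans h)
          · exact h
        have hsdiff : sf.filter (fun M => L ≤ M) \ sf.filter (fun M => b ≤ M) = {L} := by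
          ext M
          constructor
          · intro hM
            obtain ⟨hM1, hM2⟩ := Finset.mem_sdiff.1 hM
            have hMsf : M ∈ sf := Finset.mem_of_mem_filter _ hM1
            have hLM : L ≤ M := (Finset.mem_filter.1 hM1).2
            rw [Finset.mem_singleton]
            by_contra hne
            have hnML : ¬ M ≤ L := fun hc => hne ((levelization_le_antisymm hLM hc).symm)
            exact hM2 (Finset.mem_filter.2 ⟨hMsf,
              hble M (Finset.mem_filter.2 ⟨hMsf, hnML⟩)⟩)
          · intro hM
            rw [Finset.mem_singleton] at hM
            subst hM
            refine Finset.mem_sdiff.2 ⟨Finset.mem_filter.2 ⟨hLsf, le_rfl⟩, fun hc => ?_⟩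
            exact hbnle (Finset.mem_filter.1 hc).2
        have h5 := Finset.sum_sdiff_eq_sub (f := fun M => f M / (M.m : ℝ)) hsub1
        rw [hsdiff, Finset.sum_singleton] at h5
        simp only [hτ]
        linarith only [h5]
      rw [wgt, hminIn, hOm, hdiff]
      have hm0 : (L.m : ℝ) ≠ 0 := by
        have := mpos L
        positivity
      rw [max_eq_right (div_nonneg (hpos L) (Nat.cast_nonneg _))]
      rw [mul_comm, div_mul_cancel₀ _ hm0]
    · -- t empty : L is the top of the support
      have hall : ∀ M ∈ sf, M ≤ L := by
        intro M hM
        by_contra hc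
        exact ht ⟨M, Finset.mem_filter.2 ⟨hM, hc⟩⟩
      have hOm : Om L x = 0 := by
        refine le_antisymm (Om_le_bound L 0 le_rfl fun s hsMt hsL => ?_) (Om_nonneg L x)
        have : sf.filter (fun M => s ∈ Sfam M) = ∅ := by
          rw [Finset.filter_eq_empty_iff]
          intro M hM hsM
          exact hsL (Sfam_mono (hall M hM) hsM)
        rw [hg]
        simp only [this, Finset.sum_empty, le_refl]
      have hτL : τ L = f L / (L.m : ℝ) := by
        simp only [hτ]
        have hfil : sf.filter (fun M => L ≤ M) = {L} := by
          ext M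
          constructor
          · intro hM
            have hMsf : M ∈ sf := Finset.mem_of_mem_filter _ hM
            have hLM : L ≤ M := (Finset.mem_filter.1 hM).2
            rw [Finset.mem_singleton]
            exact (levelization_le_antisymm hLM (hall M hMsf)).symm
          · intro hM
            rw [Finset.mem_singleton] at hM
            subst hM
            exact Finset.mem_filter.2 ⟨hLsf, le_rfl⟩
        rw [hfil, Finset.sum_singleton]
      rw [wgt, hminIn, hOm, hτL, sub_zero]
      have hm0 : (L.m : ℝ) ≠ 0 := by
        have := mpos L
        positivity
      rw [max_eq_right (div_nonneg (hpos L) (Nat.cast_nonneg _))]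
      rw [mul_comm, div_mul_cancel₀ _ hm0]
  · -- L is not in the support : weight 0
    have hfL : f L = 0 := by
      by_contra hc
      exact hLsf (hmem_sf.2 hc)
    rw [hfL, wgt]
    have hbound : minIn L x ≤ Om L x := by
      by_cases hsub : Sfam L ⊆ Sfam Mt
      · have hLMt : L ≤ Mt := le_of_Sfam_subset hsub
        obtain ⟨a, hasfL, haleast'⟩ := hleast (sf.filter (fun M => L ≤ M))
          (Finset.filter_subset _ _) ⟨Mt, Finset.mem_filter.2 ⟨hMt_mem, hLMt⟩⟩
        have hasf : a ∈ sf := (Finset.mem_filter.1 hasfL).1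
        have hLa : L ≤ a := (Finset.mem_filter.1 hasfL).2
        have haleast : ∀ M ∈ sf, L ≤ M → a ≤ M := fun M hM hLM =>
          haleast' M (Finset.mem_filter.2 ⟨hM, hLM⟩)
        have hminIn : minIn L x = τ a := keyU L hsub a hasf hLa haleast
        have hnsub : ¬ Sfam a ⊆ Sfam L := by
          intro hc
          have : L = a := levelization_le_antisymm hLa (le_of_Sfam_subset hc)
          rw [this] at hLsf
          exact hLsf hasf
        obtain ⟨U', hU1', hU2'⟩ := Finset.not_subset.1 hnsub
        have h1 : gam x U' = g U' := hgam_eq U' (Sfam_mono (hMt a hasf) hU1')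
        have h2 : τ a ≤ g U' := gsum_ge a hasf U' hU1'
        have h3 : gam x U' ≤ Om L x := gam_le_Om (Sfam_subset_AF a hU1') hU2'
        rw [hminIn, h1] at *
        exact h2.trans h3
      · obtain ⟨U, hU1, hU2⟩ := Finset.not_subset.1 hsub
        obtain ⟨k, hk, hkU⟩ := Finset.mem_image.1 hU1
        rw [Finset.mem_range] at hk
        have h1 : minIn L x ≤ gam x U := by rw [← hkU]; exact minIn_le_gam hk
        have h2 : gam x U ≤ 0 :=
          gam_nonpos xmono (AF_nonempty_of_mem (Sfam_subset_AF L hU1)) hU2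
        linarith only [h1, h2, Om_nonneg L x]
    rw [max_eq_left (by linarith only [hbound]), mul_zero]

lemma Gmap_Fmap {f : Levelization V → ℝ} (hf : f ∈ PosetRealization (Levelization V)) :
    Gmap (Fmap f) = f := by
  funext L
  have hT : Tsum (Fmap f) = 1 := by
    rw [Tsum]
    rw [Finset.sum_congr rfl (fun M _ => wgt_Fmap hf M)]
    exact sum_eq_one hf
  rw [Gmap, hT, div_one]
  exact wgt_Fmap hf L

end LevelContractAux

namespace LevelContractAux

open scoped Classical

variable {V : Type} [PartialOrder V] [Fintype V] [Nonempty V]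

/-! ### existence of a levelization : the height function -/

lemma nonempty_levelization (hchain : ∀ v : V, IsChain (· ≤ ·) {u | u ≤ v}) :
    Nonempty (Levelization V) := by
  set ht : V → ℕ := fun v => (Finset.univ.filter (fun u => u < v)).card with hht
  have ht_strict : ∀ u v : V, u < v → ht u < ht v := by
    intro u v huv
    refine Finset.card_lt_card ?_
    constructor
    · intro w hw
      rw [Finset.mem_filter] at hw ⊢
      exact ⟨hw.1, hw.2.trans huv⟩
    · intro hc
      have : u ∈ Finset.univ.filter (fun w => w < v) :=
        Finset.mem_filter.2 ⟨Finset.mem_univ _, huv⟩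
      have := Finset.mem_filter.1 (hc this)
      exact lt_irrefl u this.2
  have step : ∀ v : V, 0 < ht v → ∃ u, u < v ∧ ht u = ht v - 1 := by
    intro v hv
    set t := Finset.univ.filter (fun u => u < v) with htd
    have htne : t.Nonempty := Finset.card_pos.1 hv
    have hmem : ∀ w ∈ t, w < v := fun w hw => (Finset.mem_filter.1 hw).2
    obtain ⟨u0, hu0, hu0max⟩ : ∃ b ∈ t, ∀ M ∈ t, ¬ b < M := by
      obtain ⟨i, hi⟩ := Finset.exists_maximal htne
      exact ⟨i, hi.1, fun M hM hlt => lt_irrefl _ (hlt.trans_le (hi.2 hM hlt.le))⟩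
    have hgr : ∀ w ∈ t, w ≤ u0 := by
      intro w hw
      rcases eq_or_ne w u0 with rfl | hne
      · exact le_rfl
      rcases hchain v (le_of_lt (hmem w hw)) (le_of_lt (hmem u0 hu0)) hne with h | h
      · exact h
      · by_contra hc
        exact hu0max w hw (lt_of_le_not_ge h hc)
    have hfe : Finset.univ.filter (fun w => w < u0) = t.erase u0 := by
      ext w
      rw [Finset.mem_filter, Finset.mem_erase]
      constructor
      · intro hw
        refine ⟨ne_of_lt hw.2, Finset.mem_filter.2 ⟨Finset.mem_univ _, hw.2.trans (hmem u0 hu0)⟩⟩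
      · intro hw
        exact ⟨Finset.mem_univ _, lt_of_le_of_ne (hgr w hw.2) hw.1⟩
    refine ⟨u0, hmem u0 hu0, ?_⟩
    rw [hht]
    show (Finset.univ.filter (fun w => w < u0)).card = _
    rw [hfe, Finset.card_erase_of_mem hu0]
  have exists_ht : ∀ n : ℕ, ∀ v : V, ht v = n → ∀ j ≤ n, ∃ u, ht u = j := by
    intro n
    induction n with
    | zero =>
      intro v hv j hj
      exact ⟨v, by omega⟩
    | succ n ih =>
      intro v hv j hj
      rcases eq_or_lt_of_le hj with rfl | hj'
      · exact ⟨v, hv⟩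
      · obtain ⟨u, _, hu'⟩ := step v (by omega)
        exact ih u (by omega) j (by omega)
  obtain ⟨v0, _, hv0⟩ := Finset.exists_mem_eq_sup' Finset.univ_nonempty ht
  refine ⟨⟨Finset.univ.sup' Finset.univ_nonempty ht + 1,
    fun v => ⟨ht v, ?_⟩, ?_, fun v w h => ?_⟩⟩
  · have : ht v ≤ Finset.univ.sup' Finset.univ_nonempty ht :=
      Finset.le_sup' ht (Finset.mem_univ v)
    omega
  · rintro ⟨j, hj⟩
    obtain ⟨u, hu⟩ := exists_ht (ht v0) v0 rfl j (by omega)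
    exact ⟨u, Fin.ext (by simpa using hu)⟩
  · exact Fin.mk_lt_mk.2 (ht_strict v w h)

/-! ### continuity -/

lemma fmax_cons {α : Type*} {s : Finset α} {a : α} (h : a ∉ s) (g : α → ℝ) :
    fmax (Finset.cons a s h) g = max (g a) (fmax s g) := Finset.fold_cons h

lemma cont_fmax {ι X : Type*} [TopologicalSpace X] (s : Finset ι) (g : ι → X → ℝ)
    (hg : ∀ i, Continuous (g i)) : Continuous fun x => fmax s (fun i => g i x) := by
  induction s using Finset.cons_induction with
  | empty => simpa [fmax_empty] using continuous_const
  | cons a s h ih =>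
    have : (fun x => fmax (Finset.cons a s h) (fun i => g i x)) =
        fun x => max (g a x) (fmax s (fun i => g i x)) := by
      funext x
      exact fmax_cons h _
    rw [this]
    exact (hg a).max ih

lemma cont_inf' {ι X : Type*} [TopologicalSpace X] (s : Finset ι) (hs : s.Nonempty)
    (g : ι → X → ℝ) (hg : ∀ i, Continuous (g i)) :
    Continuous fun x => s.inf' hs (fun i => g i x) := by
  refine Finset.Nonempty.cons_induction
    (motive := fun s hs => Continuous fun x => s.inf' hs (fun i => g i x)) ?_ ?_ hs
  · intro a
    simpa using hg a
  · intro a s h hs ih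
    show Continuous fun x => (Finset.cons a s h).inf' (Finset.cons_nonempty h)
      (fun i => g i x)
    have heq2 : (fun x => (Finset.cons a s h).inf' (Finset.cons_nonempty h)
        (fun i => g i x)) = fun x => min (g a x) (s.inf' hs (fun i => g i x)) := by
      funext x
      exact Finset.inf'_cons hs _
    rw [heq2]
    exact (hg a).min ih

lemma cont_gam (s : Finset V) : Continuous fun x : V → ℝ => gam x s := by
  by_cases hs : s.Nonempty
  · have : (fun x : V → ℝ => gam x s) =
        fun x => s.inf' hs x - fmax sᶜ x := by
      funext x
      exact gam_of_nonempty hs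
    rw [this]
    exact (cont_inf' s hs (fun v (x : V → ℝ) => x v) (fun v => continuous_apply v)).sub
      (cont_fmax sᶜ (fun v (x : V → ℝ) => x v) (fun v => continuous_apply v))
  · have : (fun x : V → ℝ => gam x s) = fun _ => (0:ℝ) := by
      funext x
      exact dif_neg hs
    rw [this]
    exact continuous_const

lemma cont_wgt (L : Levelization V) : Continuous fun x : V → ℝ => wgt L x := by
  have h1 : Continuous fun x : V → ℝ => minIn L x :=
    cont_inf' _ _ (fun k x => gam x (Uset L k)) (fun k => cont_gam _)
  have h2 : Continuous fun x : V → ℝ => Om L x :=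
    cont_fmax _ (fun s x => gam x s) (fun s => cont_gam s)
  exact continuous_const.mul (continuous_const.max (h1.sub h2))

lemma cont_Tsum : Continuous fun x : V → ℝ => Tsum x :=
  continuous_finset_sum _ fun L _ => cont_wgt L

end LevelContractAux


open LevelContractAux in
/-- **Lemma 7.2.** For every finite rooted tree with at least one internal vertex — whose
poset `V` of internal vertices is a nonempty finite poset with a least element (the root)
in which the set of elements below any given element is a chain — the geometric
realization of the poset `X_T` of levelizations of the tree is contractible. -/
theorem contractible_realization_levelizations (V : Type) [PartialOrder V] [Finite V]
    [Nonempty V]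
    (hchain : ∀ v : V, IsChain (· ≤ ·) {u | u ≤ v})
    (hroot : ∃ rt : V, ∀ v, rt ≤ v) :
    ContractibleSpace ↥(PosetRealization (Levelization V)) := by
  classical
  letI : Fintype V := Fintype.ofFinite V
  obtain ⟨L0⟩ := nonempty_levelization hchain
  -- the cone point
  set δ : Levelization V → ℝ := fun L => if L = L0 then 1 else 0 with hδdef
  have hδsupp : ∀ L : Levelization V, δ L ≠ 0 → L = L0 := by
    intro L h
    by_contra hc
    rw [hδdef] at h
    simp only [if_neg hc] at h
    exact h rfl
  have hδ : δ ∈ PosetRealization (Levelization V) := by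
    refine ⟨?_, Set.toFinite _, ?_, ?_⟩
    · intro L
      rw [hδdef]
      dsimp only
      split_ifs <;> norm_num
    · rw [finsum_eq_sum_of_fintype, hδdef]
      simp
    · intro a ha b hb hne
      exact absurd ((hδsupp a ha).trans (hδsupp b hb).symm) hne
  rw [contractible_iff_id_nullhomotopic]
  refine ⟨⟨δ, hδ⟩, ?_⟩
  -- the homotopy
  set X' := ↥(PosetRealization (Levelization V))
  set x0 : V → ℝ := Fmap δ with hx0
  have hx0O : x0 ∈ Oset V := F_mem_O hδ
  set y : unitInterval × X' → (V → ℝ) :=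
    fun p => fun v => (1 - (p.1 : ℝ)) * Fmap (p.2 : Levelization V → ℝ) v + (p.1 : ℝ) * x0 v
    with hy
  have hyO : ∀ p, y p ∈ Oset V := by
    rintro ⟨t, f⟩
    have hF : Fmap (f : Levelization V → ℝ) ∈ Oset V := F_mem_O f.2
    have ht0 : (0:ℝ) ≤ (t : ℝ) := t.2.1
    have ht1 : (t : ℝ) ≤ 1 := t.2.2
    constructor
    · intro v
      have h1 := hF.1 v
      have h2 := hx0O.1 v
      rw [hy]
      dsimp only
      rcases lt_or_ge (t:ℝ) 1 with h | h
      · nlinarith [mul_pos (by linarith : (0:ℝ) < 1 - (t:ℝ)) h1, mul_nonneg ht0 h2.le]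
      · have hteq : (t:ℝ) = 1 := le_antisymm ht1 h
        rw [hteq]
        nlinarith
    · intro u v huv
      have h1 := hF.2 huv
      have h2 := hx0O.2 huv
      rw [hy]
      dsimp only
      rcases lt_or_ge (t:ℝ) 1 with h | h
      · nlinarith [mul_pos (by linarith : (0:ℝ) < 1 - (t:ℝ)) (sub_pos.2 h1),
          mul_nonneg ht0 (sub_pos.2 h2).le]
      · have hteq : (t:ℝ) = 1 := le_antisymm ht1 h
        rw [hteq]
        nlinarith
  have hGmem : ∀ p, Gmap (y p) ∈ PosetRealization (Levelization V) :=
    fun p => Gmap_mem (hyO p)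
  have conty : Continuous y := by
    refine continuous_pi fun v => ?_
    refine Continuous.add (Continuous.mul ?_ ?_) (Continuous.mul ?_ continuous_const)
    · exact (continuous_const.sub (continuous_subtype_val.comp continuous_fst))
    · refine continuous_finset_sum _ fun L _ => ?_
      exact ((continuous_apply L).comp (continuous_subtype_val.comp continuous_snd)).mul
        continuous_const
    · exact continuous_subtype_val.comp continuous_fst
  have hcont : Continuous fun p : unitInterval × X' => (⟨Gmap (y p), hGmem p⟩ : X') := by
    refine Continuous.subtype_mk ?_ _
    refine continuous_pi fun L => ?_
    have h1 : Continuous fun p : unitInterval × X' => wgt L (y p) := (cont_wgt L).comp conty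
    have h2 : Continuous fun p : unitInterval × X' => Tsum (y p) := cont_Tsum.comp conty
    exact h1.div h2 fun p => (Tsum_pos (hyO p)).ne'
  have h0 : ∀ f : X', (⟨Gmap (y (0, f)), hGmem (0, f)⟩ : X') = f := by
    intro f
    have hy0 : y (0, f) = Fmap (f : Levelization V → ℝ) := by
      funext v
      rw [hy]
      dsimp only
      norm_num
    refine Subtype.ext ?_
    show Gmap (y (0, f)) = (f : Levelization V → ℝ)
    rw [hy0]
    exact Gmap_Fmap f.2
  have h1 : ∀ f : X', (⟨Gmap (y (1, f)), hGmem (1, f)⟩ : X') = ⟨δ, hδ⟩ := by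
    intro f
    have hy1 : y (1, f) = Fmap δ := by
      funext v
      rw [hy]
      dsimp only
      norm_num
      rfl
    refine Subtype.ext ?_
    show Gmap (y (1, f)) = δ
    rw [hy1]
    exact Gmap_Fmap hδ
  exact ⟨ContinuousMap.Homotopy.mk ⟨fun p => ⟨Gmap (y p), hGmem p⟩, hcont⟩ h0 h1⟩
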